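/- The semigroup M_n(𝕋_{[1,2]}) of n×n matrices over the truncated tropical semiring 𝕋_{[1,2]} is strongly permutable for every n ∈ ℕ. -/

import Mathlib

set_option maxHeartbeats 1000000

universe u

/-! ### Semiring classes.

A *semiring* here is a nonempty set with an associative commutative addition and an
associative multiplication which distributes over addition on both sides; no zero or
identity element is assumed. -/

class PlainSemiring (S : Type u) extends Add S, Mul S where
  nonempty' : Nonempty S
  add_assoc' : ∀ a b c : S, a + b + c = a + (b + c)
  add_comm' : ∀ a b : S, a + b = b + a
  mul_assoc' : ∀ a b c : S, a * b * c = a * (b * c)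
  left_distrib' : ∀ a b c : S, a * (b + c) = a * b + a * c
  right_distrib' : ∀ a b c : S, (a + b) * c = a * c + b * c

/-- A bipotent semiring: `x + y` is always either `x` or `y`.
(The induced total order is given by `x ≤ y ↔ x + y = y`.) -/
class BipotentSemiring (S : Type u) extends PlainSemiring S where
  bipotent : ∀ a b : S, a + b = a ∨ a + b = b

/-- A commutative bipotent semiring. -/
class CommBipotentSemiring (S : Type u) extends BipotentSemiring S where
  mul_comm' : ∀ a b : S, a * b = b * a

/-- `mpow a n` is the `(n+1)`-st power of `a`, so the set of positive powers of `a`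
is exactly `Set.range (mpow a)`, and the multiplicative order of `a` is the
cardinality of `Set.range (mpow a)`. -/
def mpow {S : Type*} [Mul S] (a : S) : ℕ → S
  | 0 => a
  | n + 1 => mpow a n * a

lemma mpow_mul_mpow {S : Type*} [PlainSemiring S] (a : S) (m n : ℕ) :
    mpow a m * mpow a n = mpow a (m + n + 1) := by
  induction n with
  | zero => rfl
  | succ n ih =>
    show mpow a m * (mpow a n * a) = mpow a (m + n + 1) * a
    rw [← PlainSemiring.mul_assoc', ih]

/-! ### Products of finite families, and permutability. -/

/-- Fold step used to define sums/products of possibly empty families in a structure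
with no neutral element; the overall fold is `none` iff the family is empty. -/
def optStep {S : Type*} (op : S → S → S) : Option S → S → Option S :=
  fun acc x => some (acc.elim x (fun a => op a x))

/-- The sum `s 0 + s 1 + ⋯` of a finite family, as an `Option` (`none` iff `k = 0`). -/
def finSum {S : Type*} [Add S] {k : ℕ} (s : Fin k → S) : Option S :=
  (List.ofFn s).foldl (optStep (· + ·)) none

/-- The product `s 0 * s 1 * ⋯` of a finite family, as an `Option` (`none` iff `k = 0`). -/
def finProd {S : Type*} [Mul S] {k : ℕ} (s : Fin k → S) : Option S :=
  (List.ofFn s).foldl (optStep (· * ·)) none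

/-- A multiplicative structure is `k`-permutable if every product of `k` elements is
preserved by some non-identity permutation of its factors. -/
def KPermutable (S : Type*) [Mul S] (k : ℕ) : Prop :=
  ∀ s : Fin k → S, ∃ σ : Equiv.Perm (Fin k), σ ≠ Equiv.refl (Fin k) ∧
    finProd (fun i => s (σ i)) = finProd s

/-- A semigroup is strongly permutable if it is `k`-permutable for some `k ≥ 2`. -/
def StronglyPermutable (S : Type*) [Mul S] : Prop :=
  ∃ k : ℕ, 2 ≤ k ∧ KPermutable S k

/-- A semigroup is weakly permutable if for some `k ≥ 2`, any product of `k` elements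
is computed identically by two distinct permutations of its factors. -/
def WeaklyPermutable (S : Type*) [Mul S] : Prop :=
  ∃ k : ℕ, 2 ≤ k ∧ ∀ s : Fin k → S, ∃ σ τ : Equiv.Perm (Fin k), σ ≠ τ ∧
    finProd (fun i => s (σ i)) = finProd (fun i => s (τ i))

/-- Isomorphism of semirings (bijection preserving addition and multiplication). -/
def RingLikeIso (S T : Type*) [Add S] [Mul S] [Add T] [Mul T] : Prop :=
  ∃ f : S → T, Function.Bijective f ∧ (∀ a b : S, f (a + b) = f a + f b) ∧
    (∀ a b : S, f (a * b) = f a * f b)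

/-! ### Matrices. -/

/-- Square `n × n` matrices over `S`. -/
def MatSR (S : Type u) (n : ℕ) : Type u := Fin n → Fin n → S

/-- Matrix multiplication, `(A*B) i j = Σ_k (A i k * B k j)`.  (For `n ≥ 1` — the only
case of interest — the `getD` default value is never used.) -/
def matMul {S : Type*} [Add S] [Mul S] {n : ℕ} (A B : MatSR S n) : MatSR S n :=
  fun i j => (finSum (fun k : Fin n => A i k * B k j)).getD (A i j * B i j)

/-- The multiplicative semigroup `M_n(S)`. -/
instance {S : Type*} [Add S] [Mul S] {n : ℕ} : Mul (MatSR S n) := ⟨matMul⟩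

/-! ### `S⁰`: adjoining a zero, and upper triangular matrices. -/

/-- `S` with a zero (additively neutral, multiplicatively absorbing) element adjoined. -/
inductive Adj0 (S : Type u) : Type u
  | zero : Adj0 S
  | elem : S → Adj0 S

namespace Adj0

def add' {S : Type*} [Add S] : Adj0 S → Adj0 S → Adj0 S
  | .zero, b => b
  | .elem a, .zero => .elem a
  | .elem a, .elem b => .elem (a + b)

def mul' {S : Type*} [Mul S] : Adj0 S → Adj0 S → Adj0 S
  | .zero, _ => .zero
  | .elem _, .zero => .zero
  | .elem a, .elem b => .elem (a * b)

instance {S : Type*} [Add S] : Add (Adj0 S) := ⟨add'⟩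
instance {S : Type*} [Mul S] : Mul (Adj0 S) := ⟨mul'⟩

@[simp] lemma zero_add {S : Type*} [Add S] (b : Adj0 S) : (zero : Adj0 S) + b = b := rfl
@[simp] lemma add_zero {S : Type*} [Add S] (a : Adj0 S) : a + (zero : Adj0 S) = a := by
  cases a <;> rfl
@[simp] lemma elem_add_elem {S : Type*} [Add S] (a b : S) :
    (elem a : Adj0 S) + elem b = elem (a + b) := rfl
@[simp] lemma zero_mul {S : Type*} [Mul S] (b : Adj0 S) : (zero : Adj0 S) * b = zero := rfl
@[simp] lemma mul_zero {S : Type*} [Mul S] (a : Adj0 S) : a * (zero : Adj0 S) = zero := by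
  cases a <;> rfl
@[simp] lemma elem_mul_elem {S : Type*} [Mul S] (a b : S) :
    (elem a : Adj0 S) * elem b = elem (a * b) := rfl

lemma add_eq_zero_iff {S : Type*} [Add S] (a b : Adj0 S) :
    a + b = zero ↔ a = zero ∧ b = zero := by
  cases a <;> cases b <;> simp

end Adj0

lemma foldl_optStep_adj0 {S : Type*} [Add S] (l : List (Adj0 S)) (a : Adj0 S) :
    ∃ c : Adj0 S, l.foldl (optStep (· + ·)) (some a) = some c ∧
      (c = Adj0.zero ↔ a = Adj0.zero ∧ ∀ x ∈ l, x = Adj0.zero) := by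
  induction l generalizing a with
  | nil => exact ⟨a, rfl, by simp⟩
  | cons x l ih =>
    obtain ⟨c, hc, hiff⟩ := ih (a + x)
    refine ⟨c, ?_, ?_⟩
    · simpa [optStep] using hc
    · rw [hiff, Adj0.add_eq_zero_iff]
      simp only [List.mem_cons, forall_eq_or_imp]
      tauto

lemma finSum_adj0_eq_zero {S : Type*} [Add S] {n : ℕ} (f : Fin n → Adj0 S) (i : Fin n)
    (d : Adj0 S) (h : ∀ k, f k = Adj0.zero) : (finSum f).getD d = Adj0.zero := by
  cases n with
  | zero => exact i.elim0
  | succ m =>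
    rw [finSum, List.ofFn_succ, List.foldl_cons]
    obtain ⟨c, hc, hiff⟩ := foldl_optStep_adj0 (List.ofFn fun i : Fin m => f i.succ) (f 0)
    rw [show optStep (· + ·) none (f 0) = some (f 0) from rfl, hc]
    have : c = Adj0.zero := hiff.mpr ⟨h 0, by
      intro x hx
      rw [List.mem_ofFn] at hx
      obtain ⟨j, rfl⟩ := hx
      exact h _⟩
    simp [this]

lemma finSum_adj0_ne_zero {S : Type*} [Add S] {n : ℕ} (f : Fin n → Adj0 S) (i : Fin n)
    (d : Adj0 S) (h : f i ≠ Adj0.zero) : (finSum f).getD d ≠ Adj0.zero := by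
  cases n with
  | zero => exact i.elim0
  | succ m =>
    rw [finSum, List.ofFn_succ, List.foldl_cons]
    obtain ⟨c, hc, hiff⟩ := foldl_optStep_adj0 (List.ofFn fun i : Fin m => f i.succ) (f 0)
    rw [show optStep (· + ·) none (f 0) = some (f 0) from rfl, hc]
    simp only [Option.getD_some]
    intro hcz
    obtain ⟨h0, hall⟩ := hiff.mp hcz
    induction i using Fin.cases with
    | zero => exact h h0
    | succ j => exact h (hall _ (List.mem_ofFn.mpr ⟨j, rfl⟩))

/-- Upper-triangularity over `S⁰`: entries strictly below the diagonal are the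
adjoined zero; entries on and above the diagonal lie in `S`. -/
def IsUT {S : Type*} {n : ℕ} (A : MatSR (Adj0 S) n) : Prop :=
  (∀ i j : Fin n, (j : ℕ) < (i : ℕ) → A i j = Adj0.zero) ∧
  (∀ i j : Fin n, (i : ℕ) ≤ (j : ℕ) → ∃ s : S, A i j = Adj0.elem s)

lemma IsUT.mul {S : Type*} [Add S] [Mul S] {n : ℕ} {A B : MatSR (Adj0 S) n}
    (hA : IsUT A) (hB : IsUT B) : IsUT (matMul A B) := by
  constructor
  · intro i j hji
    apply finSum_adj0_eq_zero _ i
    intro k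
    rcases le_or_gt (i : ℕ) (k : ℕ) with h | h
    · rw [hB.1 k j (lt_of_lt_of_le hji h), Adj0.mul_zero]
    · rw [hA.1 i k h, Adj0.zero_mul]
  · intro i j hij
    have hne : matMul A B i j ≠ Adj0.zero := by
      apply finSum_adj0_ne_zero _ i
      obtain ⟨s, hs⟩ := hA.2 i i le_rfl
      obtain ⟨t, ht⟩ := hB.2 i j hij
      rw [hs, ht, Adj0.elem_mul_elem]
      simp
    cases hc : matMul A B i j with
    | zero => exact absurd hc hne
    | elem s => exact ⟨s, rfl⟩

/-- The multiplicative semigroup `UT_n(S)` of upper triangular matrices over `S⁰`. -/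
def UTMat (S : Type u) (n : ℕ) : Type u := {A : MatSR (Adj0 S) n // IsUT A}

instance {S : Type*} [Add S] [Mul S] {n : ℕ} : Mul (UTMat S n) :=
  ⟨fun A B => ⟨matMul A.1 B.1, A.2.mul B.2⟩⟩

/-! ### `S^{01}`: adjoining a zero and an identity, and unitriangular matrices. -/

/-- `S` with a zero and a multiplicative identity adjoined (`S^{01}` in the paper).
The sum of `one` and an `elem` is left undefined in the paper; it is given an
arbitrary value here, and never arises in products of unitriangular matrices. -/
inductive Adj01 (S : Type u) : Type u
  | zero : Adj01 S
  | one : Adj01 S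
  | elem : S → Adj01 S

namespace Adj01

def add' {S : Type*} [Add S] : Adj01 S → Adj01 S → Adj01 S
  | .zero, b => b
  | a, .zero => a
  | .one, .one => .one
  | .one, .elem b => .elem b
  | .elem a, .one => .elem a
  | .elem a, .elem b => .elem (a + b)

def mul' {S : Type*} [Mul S] : Adj01 S → Adj01 S → Adj01 S
  | .zero, _ => .zero
  | _, .zero => .zero
  | .one, b => b
  | a, .one => a
  | .elem a, .elem b => .elem (a * b)

instance {S : Type*} [Add S] : Add (Adj01 S) := ⟨add'⟩
instance {S : Type*} [Mul S] : Mul (Adj01 S) := ⟨mul'⟩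

@[simp] lemma zero_add {S : Type*} [Add S] (b : Adj01 S) : (zero : Adj01 S) + b = b := by
  cases b <;> rfl
@[simp] lemma add_zero {S : Type*} [Add S] (a : Adj01 S) : a + (zero : Adj01 S) = a := by
  cases a <;> rfl
@[simp] lemma one_add_one {S : Type*} [Add S] : (one : Adj01 S) + one = one := rfl
@[simp] lemma elem_add_elem {S : Type*} [Add S] (a b : S) :
    (elem a : Adj01 S) + elem b = elem (a + b) := rfl
@[simp] lemma one_add_elem {S : Type*} [Add S] (b : S) :
    (one : Adj01 S) + elem b = elem b := rfl
@[simp] lemma elem_add_one {S : Type*} [Add S] (a : S) :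
    (elem a : Adj01 S) + one = elem a := rfl
@[simp] lemma zero_mul {S : Type*} [Mul S] (b : Adj01 S) : (zero : Adj01 S) * b = zero := by
  cases b <;> rfl
@[simp] lemma mul_zero {S : Type*} [Mul S] (a : Adj01 S) : a * (zero : Adj01 S) = zero := by
  cases a <;> rfl
@[simp] lemma one_mul {S : Type*} [Mul S] (b : Adj01 S) : (one : Adj01 S) * b = b := by
  cases b <;> rfl
@[simp] lemma mul_one {S : Type*} [Mul S] (a : Adj01 S) : a * (one : Adj01 S) = a := by
  cases a <;> rfl
@[simp] lemma elem_mul_elem {S : Type*} [Mul S] (a b : S) :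
    (elem a : Adj01 S) * elem b = elem (a * b) := rfl

lemma mul_ne_one {S : Type*} [Mul S] {a b : Adj01 S} (ha : a ≠ one) (hb : b ≠ one) :
    a * b ≠ one := by
  cases a <;> cases b <;> simp_all

lemma add_ne_one {S : Type*} [Add S] {a b : Adj01 S} (ha : a ≠ one) (hb : b ≠ one) :
    a + b ≠ one := by
  cases a <;> cases b <;> simp_all

lemma add_01 {S : Type*} [Add S] {a b : Adj01 S} (ha : a = zero ∨ a = one)
    (hb : b = zero ∨ b = one) :
    (a + b = zero ∨ a + b = one) ∧ (a + b = one ↔ a = one ∨ b = one) := by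
  rcases ha with rfl | rfl <;> rcases hb with rfl | rfl <;> simp

end Adj01

lemma foldl_optStep_adj01 {S : Type*} [Add S] (l : List (Adj01 S)) (a : Adj01 S)
    (ha : a = Adj01.zero ∨ a = Adj01.one) (hl : ∀ x ∈ l, x = Adj01.zero ∨ x = Adj01.one) :
    ∃ c : Adj01 S, l.foldl (optStep (· + ·)) (some a) = some c ∧
      (c = Adj01.zero ∨ c = Adj01.one) ∧
      (c = Adj01.one ↔ a = Adj01.one ∨ ∃ x ∈ l, x = Adj01.one) := by
  induction l generalizing a with
  | nil => exact ⟨a, rfl, ha, by simp⟩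
  | cons x l ih =>
    have hx := hl x (by simp)
    have key := Adj01.add_01 ha hx
    obtain ⟨c, hc, hc01, hiff⟩ := ih (a + x) key.1 (fun y hy => hl y (by simp [hy]))
    refine ⟨c, by simpa [optStep] using hc, hc01, ?_⟩
    rw [hiff, key.2]
    simp only [List.mem_cons, exists_eq_or_imp]
    tauto

lemma foldl_optStep_adj01_ne_one {S : Type*} [Add S] (l : List (Adj01 S)) (a : Adj01 S)
    (ha : a ≠ Adj01.one) (hl : ∀ x ∈ l, x ≠ Adj01.one) :
    ∃ c : Adj01 S, l.foldl (optStep (· + ·)) (some a) = some c ∧ c ≠ Adj01.one := by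
  induction l generalizing a with
  | nil => exact ⟨a, rfl, ha⟩
  | cons x l ih =>
    have hax : a + x ≠ Adj01.one := Adj01.add_ne_one ha (hl x (by simp))
    obtain ⟨c, hc, hcne⟩ := ih (a + x) hax (fun y hy => hl y (by simp [hy]))
    exact ⟨c, by simpa [optStep] using hc, hcne⟩

lemma finSum_adj01_eq_one {S : Type*} [Add S] {n : ℕ} (f : Fin n → Adj01 S) (i : Fin n)
    (d : Adj01 S) (h01 : ∀ k, f k = Adj01.zero ∨ f k = Adj01.one) (hi : f i = Adj01.one) :
    (finSum f).getD d = Adj01.one := by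
  cases n with
  | zero => exact i.elim0
  | succ m =>
    rw [finSum, List.ofFn_succ, List.foldl_cons]
    obtain ⟨c, hc, _, hiff⟩ := foldl_optStep_adj01 (List.ofFn fun i : Fin m => f i.succ) (f 0)
      (h01 0) (by
        intro x hx
        rw [List.mem_ofFn] at hx
        obtain ⟨j, rfl⟩ := hx
        exact h01 _)
    rw [show optStep (· + ·) none (f 0) = some (f 0) from rfl, hc]
    simp only [Option.getD_some]
    apply hiff.mpr
    induction i using Fin.cases with
    | zero => exact Or.inl hi
    | succ j => exact Or.inr ⟨f j.succ, List.mem_ofFn.mpr ⟨j, rfl⟩, hi⟩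

lemma finSum_adj01_eq_zero {S : Type*} [Add S] {n : ℕ} (f : Fin n → Adj01 S) (i : Fin n)
    (d : Adj01 S) (h : ∀ k, f k = Adj01.zero) : (finSum f).getD d = Adj01.zero := by
  cases n with
  | zero => exact i.elim0
  | succ m =>
    rw [finSum, List.ofFn_succ, List.foldl_cons]
    obtain ⟨c, hc, hc01, hiff⟩ := foldl_optStep_adj01 (List.ofFn fun i : Fin m => f i.succ)
      (f 0) (Or.inl (h 0)) (by
        intro x hx
        rw [List.mem_ofFn] at hx
        obtain ⟨j, rfl⟩ := hx
        exact Or.inl (h _))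
    rw [show optStep (· + ·) none (f 0) = some (f 0) from rfl, hc]
    simp only [Option.getD_some]
    rcases hc01 with h' | h'
    · exact h'
    · exfalso
      rcases hiff.mp h' with h'' | ⟨x, hx, hx1⟩
      · rw [h 0] at h''; cases h''
      · rw [List.mem_ofFn] at hx
        obtain ⟨j, rfl⟩ := hx
        rw [h _] at hx1; cases hx1

lemma finSum_adj01_ne_one {S : Type*} [Add S] {n : ℕ} (f : Fin n → Adj01 S) (i : Fin n)
    (d : Adj01 S) (h : ∀ k, f k ≠ Adj01.one) : (finSum f).getD d ≠ Adj01.one := by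
  cases n with
  | zero => exact i.elim0
  | succ m =>
    rw [finSum, List.ofFn_succ, List.foldl_cons]
    obtain ⟨c, hc, hcne⟩ := foldl_optStep_adj01_ne_one (List.ofFn fun i : Fin m => f i.succ)
      (f 0) (h 0) (by
        intro x hx
        rw [List.mem_ofFn] at hx
        obtain ⟨j, rfl⟩ := hx
        exact h _)
    rw [show optStep (· + ·) none (f 0) = some (f 0) from rfl, hc]
    simpa using hcne

/-- Unitriangularity over `S^{01}`: the adjoined zero strictly below the diagonal, the
adjoined identity on the diagonal, and entries of `S⁰` (i.e. anything except the
adjoined identity) strictly above the diagonal. -/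
def IsU {S : Type*} {n : ℕ} (A : MatSR (Adj01 S) n) : Prop :=
  (∀ i j : Fin n, (j : ℕ) < (i : ℕ) → A i j = Adj01.zero) ∧
  (∀ i : Fin n, A i i = Adj01.one) ∧
  (∀ i j : Fin n, (i : ℕ) < (j : ℕ) → A i j ≠ Adj01.one)

lemma IsU.mul {S : Type*} [Add S] [Mul S] {n : ℕ} {A B : MatSR (Adj01 S) n}
    (hA : IsU A) (hB : IsU B) : IsU (matMul A B) := by
  refine ⟨?_, ?_, ?_⟩
  · intro i j hji
    apply finSum_adj01_eq_zero _ i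
    intro k
    rcases le_or_gt (i : ℕ) (k : ℕ) with h | h
    · rw [hB.1 k j (lt_of_lt_of_le hji h), Adj01.mul_zero]
    · rw [hA.1 i k h, Adj01.zero_mul]
  · intro i
    apply finSum_adj01_eq_one _ i
    · intro k
      rcases lt_trichotomy (k : ℕ) (i : ℕ) with h | h | h
      · rw [hA.1 i k h, Adj01.zero_mul]; exact Or.inl rfl
      · have : k = i := Fin.ext h
        subst this
        rw [hA.2.1 k, hB.2.1 k, Adj01.one_mul]; exact Or.inr rfl
      · rw [hB.1 k i h, Adj01.mul_zero]; exact Or.inl rfl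
    · rw [hA.2.1 i, hB.2.1 i, Adj01.one_mul]
  · intro i j hij
    apply finSum_adj01_ne_one _ i
    intro k
    rcases lt_trichotomy (k : ℕ) (i : ℕ) with h | h | h
    · rw [hA.1 i k h, Adj01.zero_mul]; exact fun h => by cases h
    · have : k = i := Fin.ext h
      subst this
      rw [hA.2.1 k, Adj01.one_mul]
      exact hB.2.2 k j (by omega)
    · rcases lt_trichotomy (k : ℕ) (j : ℕ) with h' | h' | h'
      · exact Adj01.mul_ne_one (hA.2.2 i k h) (hB.2.2 k j h')
      · have : k = j := Fin.ext h'
        subst this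
        rw [hB.2.1 k, Adj01.mul_one]
        exact hA.2.2 i k h
      · rw [hB.1 k j h', Adj01.mul_zero]; exact fun h => by cases h

/-- The multiplicative monoid `U_n(S)` of unitriangular matrices over `S^{01}`. -/
def UMat (S : Type u) (n : ℕ) : Type u := {A : MatSR (Adj01 S) n // IsU A}

instance {S : Type*} [Add S] [Mul S] {n : ℕ} : Mul (UMat S n) :=
  ⟨fun A B => ⟨matMul A.1 B.1, A.2.mul B.2⟩⟩

/-! ### Monogenic subsemirings. -/

/-- The carrier of the monogenic subsemiring `⟨a⟩` generated by `a` is the set of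
positive powers of `a`; in a bipotent semiring it is closed under addition. -/
instance genAdd {S : Type*} [BipotentSemiring S] (a : S) : Add ↥(Set.range (mpow a)) :=
  ⟨fun p q => ⟨p.1 + q.1, by
    rcases BipotentSemiring.bipotent p.1 q.1 with h | h <;> rw [h]
    exacts [p.2, q.2]⟩⟩

instance genMul {S : Type*} [BipotentSemiring S] (a : S) : Mul ↥(Set.range (mpow a)) :=
  ⟨fun p q => ⟨p.1 * q.1, by
    obtain ⟨m, hm⟩ := p.2
    obtain ⟨n, hn⟩ := q.2
    exact ⟨m + n + 1, by rw [← hm, ← hn, mpow_mul_mpow]⟩⟩⟩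

/-! ### Concrete bipotent semirings. -/

/-- The tropical semiring `ℕ_max` of positive natural numbers: addition is `max`,
multiplication is ordinary addition. -/
def NMax : Type := {n : ℕ // 0 < n}

instance : Add NMax := ⟨fun a b => ⟨max a.1 b.1, by have := a.2; have := b.2; omega⟩⟩
instance : Mul NMax := ⟨fun a b => ⟨a.1 + b.1, by have := a.2; have := b.2; omega⟩⟩

/-- The tropical semiring `(-ℕ)_max` of negative integers: addition is `max`,
multiplication is ordinary addition. -/
def NegNMax : Type := {z : ℤ // z < 0}

instance : Add NegNMax := ⟨fun a b => ⟨max a.1 b.1, by have := a.2; have := b.2; omega⟩⟩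
instance : Mul NegNMax := ⟨fun a b => ⟨a.1 + b.1, by have := a.2; have := b.2; omega⟩⟩

/-- The truncated tropical semiring `[k]_max` on `{1,…,k}`: addition is `max`,
multiplication is `a·b = min (a+b) k`. -/
def KMax (k : ℕ) : Type := {n : ℕ // 0 < n ∧ n ≤ k}

instance {k : ℕ} : Add (KMax k) :=
  ⟨fun a b => ⟨max a.1 b.1, by have := a.2; have := b.2; omega⟩⟩
instance {k : ℕ} : Mul (KMax k) :=
  ⟨fun a b => ⟨min (a.1 + b.1) k, by have := a.2; have := b.2; omega⟩⟩

/-- The truncated tropical semiring `[-k]_max` on `{-k,…,-1}`: addition is `max`,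
multiplication is `a·b = max (a+b) (-k)`. -/
def NegKMax (k : ℕ) : Type := {z : ℤ // -(k : ℤ) ≤ z ∧ z ≤ -1}

instance {k : ℕ} : Add (NegKMax k) :=
  ⟨fun a b => ⟨max a.1 b.1, by have := a.2; have := b.2; omega⟩⟩
instance {k : ℕ} : Mul (NegKMax k) :=
  ⟨fun a b => ⟨max (a.1 + b.1) (-(k : ℤ)), by have := a.2; have := b.2; omega⟩⟩

/-- The two-element boolean semifield `𝔹`: `{0,1}` with `0 < 1`, addition `max` (= "or")
and the usual multiplication (= "and"). -/
def BoolSR : Type := Bool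

instance : Add BoolSR := ⟨fun a b => (Bool.or a b : Bool)⟩
instance : Mul BoolSR := ⟨fun a b => (Bool.and a b : Bool)⟩

/-- A chain semiring: a linearly ordered set with addition `max` and multiplication `min`. -/
def ChainSR (L : Type u) [LinearOrder L] : Type u := L

instance {L : Type u} [LinearOrder L] : Add (ChainSR L) := ⟨fun a b => (max a b : L)⟩
instance {L : Type u} [LinearOrder L] : Mul (ChainSR L) := ⟨fun a b => (min a b : L)⟩

/-- The three-element commutative bipotent semiring of Proposition 1: order `A < B < C`
(addition is `max`), every element multiplicatively idempotent, and all products of two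
distinct elements equal to `B`. -/
inductive Three : Type
  | A : Three
  | B : Three
  | C : Three
deriving DecidableEq

instance : Fintype Three :=
  Fintype.ofList [Three.A, Three.B, Three.C] (fun x => by cases x <;> simp)

def Three.add' : Three → Three → Three
  | .A, y => y
  | x, .A => x
  | .B, y => y
  | x, .B => x
  | .C, .C => .C

def Three.mul' : Three → Three → Three
  | .A, .A => .A
  | .B, .B => .B
  | .C, .C => .C
  | _, _ => .B

instance : Add Three := ⟨Three.add'⟩
instance : Mul Three := ⟨Three.mul'⟩

instance : CommBipotentSemiring Three where
  nonempty' := ⟨Three.A⟩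
  add_assoc' := by decide
  add_comm' := by decide
  mul_assoc' := by decide
  left_distrib' := by decide
  right_distrib' := by decide
  bipotent := by decide
  mul_comm' := by decide

/-- A bundled (possibly zero-less and identity-less) semiring, used to quantify over
semirings inside hypotheses. -/
structure BundledSemiring : Type 1 where
  carrier : Type
  add : carrier → carrier → carrier
  mul : carrier → carrier → carrier
  nonempty' : Nonempty carrier
  add_assoc' : ∀ a b c, add (add a b) c = add a (add b c)
  add_comm' : ∀ a b, add a b = add b a
  mul_assoc' : ∀ a b c, mul (mul a b) c = mul a (mul b c)
  left_distrib' : ∀ a b c, mul a (add b c) = add (mul a b) (mul a c)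
  right_distrib' : ∀ a b c, mul (add a b) c = add (mul a c) (mul b c)

/-! ### Semifields. -/

/-- `z` is a zero element: additively neutral and multiplicatively absorbing. -/
def IsZeroElem {S : Type*} [Add S] [Mul S] (z : S) : Prop :=
  ∀ x : S, z + x = x ∧ x + z = x ∧ z * x = z ∧ x * z = z

/-- `S` is a semifield: a commutative semiring, possibly without zero, whose set of
non-zero elements forms a group under multiplication (with identity `e`). -/
def IsSemifield (S : Type*) [Add S] [Mul S] : Prop :=
  ∃ e : S, ¬ IsZeroElem e ∧
    (∀ x : S, ¬ IsZeroElem x → e * x = x ∧ x * e = x) ∧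
    (∀ x y : S, ¬ IsZeroElem x → ¬ IsZeroElem y → ¬ IsZeroElem (x * y)) ∧
    (∀ x : S, ¬ IsZeroElem x → ∃ y : S, ¬ IsZeroElem y ∧ x * y = e ∧ y * x = e)

/-! ### Truncated tropical semirings. -/

/-- The underlying set `[x,y] ∪ {0}` of the truncated tropical semiring `𝕋_{[x,y]}`
(without the zero element `-∞`), for `0 ≤ x`.  Addition is `max`; multiplication is
`y`-truncated addition `a ⊗ b = min (a+b) y`, with the element `0` acting as the
multiplicative identity. -/
def TTb (x y : ℝ) (_hx : 0 ≤ x) : Type := {r : ℝ // r = 0 ∨ (x ≤ r ∧ r ≤ y)}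

namespace TTb

protected def add {x y : ℝ} {hx : 0 ≤ x} (a b : TTb x y hx) : TTb x y hx :=
  ⟨max a.1 b.1, by rcases max_choice a.1 b.1 with h | h <;> rw [h]
                   exacts [a.2, b.2]⟩

protected noncomputable def mul {x y : ℝ} {hx : 0 ≤ x} (a b : TTb x y hx) : TTb x y hx :=
  if ha : a.1 = 0 then b else if hb : b.1 = 0 then a else
    ⟨min (a.1 + b.1) y, by
      rcases a.2 with h | h
      · exact absurd h ha
      rcases b.2 with h' | h'
      · exact absurd h' hb
      right
      exact ⟨le_min (by linarith [h.1, h'.1]) (by linarith [h.1, h.2]), min_le_right _ _⟩⟩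

instance {x y : ℝ} {hx : 0 ≤ x} : Add (TTb x y hx) := ⟨TTb.add⟩
noncomputable instance {x y : ℝ} {hx : 0 ≤ x} : Mul (TTb x y hx) := ⟨TTb.mul⟩

end TTb

/-- The truncated tropical semiring `𝕋_{[x,y]}` (for `0 ≤ x < y`): the real interval
`[x,y]` together with a multiplicative identity `0` and a zero `-∞`, with addition
`max` and multiplication the `y`-truncated addition `a ⊗ b = min (a+b) y`. -/
abbrev TT (x y : ℝ) (hx : 0 ≤ x) : Type := Adj0 (TTb x y hx)

/-- The multiplicative identity `0` of `𝕋_{[x,y]}`. -/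
noncomputable def ttId (x y : ℝ) (hx : 0 ≤ x) : TT x y hx := Adj0.elem ⟨0, Or.inl rfl⟩

lemma ttId_mul {x y : ℝ} {hx : 0 ≤ x} (b : TT x y hx) : ttId x y hx * b = b := by
  cases b with
  | zero => rfl
  | elem e =>
    show Adj0.elem (TTb.mul ⟨0, Or.inl rfl⟩ e) = Adj0.elem e
    unfold TTb.mul
    rw [dif_pos rfl]

/-- The subsemigroup `S` of `M_2(𝕋_{[1,z]})` of matrices of the form `[[0,a],[-∞,b]]`. -/
noncomputable def UpperS (z : ℝ) (hz : (0:ℝ) ≤ 1) : Type :=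
  {A : MatSR (TT 1 z hz) 2 // A 0 0 = ttId 1 z hz ∧ A 1 0 = Adj0.zero}

/-- The subsemigroup `S'` of `M_2(𝕋_{[1,z]})` of matrices of the form `[[0,-∞],[a,b]]`. -/
noncomputable def LowerS (z : ℝ) (hz : (0:ℝ) ≤ 1) : Type :=
  {A : MatSR (TT 1 z hz) 2 // A 0 0 = ttId 1 z hz ∧ A 0 1 = Adj0.zero}

noncomputable instance {z : ℝ} {hz : (0:ℝ) ≤ 1} : Mul (UpperS z hz) :=
  ⟨fun A B => ⟨A.1 * B.1, by
    obtain ⟨hA1, hA2⟩ := A.2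
    obtain ⟨hB1, hB2⟩ := B.2
    constructor
    · show A.1 0 0 * B.1 0 0 + A.1 0 1 * B.1 1 0 = ttId 1 z hz
      rw [hA1, hB1, hB2, ttId_mul, Adj0.mul_zero, Adj0.add_zero]
    · show A.1 1 0 * B.1 0 0 + A.1 1 1 * B.1 1 0 = Adj0.zero
      rw [hA2, hB2, Adj0.zero_mul, Adj0.mul_zero, Adj0.add_zero]⟩⟩

noncomputable instance {z : ℝ} {hz : (0:ℝ) ≤ 1} : Mul (LowerS z hz) :=
  ⟨fun A B => ⟨A.1 * B.1, by
    obtain ⟨hA1, hA2⟩ := A.2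
    obtain ⟨hB1, hB2⟩ := B.2
    constructor
    · show A.1 0 0 * B.1 0 0 + A.1 0 1 * B.1 1 0 = ttId 1 z hz
      rw [hA1, hB1, hA2, ttId_mul, Adj0.zero_mul, Adj0.add_zero]
    · show A.1 0 0 * B.1 0 1 + A.1 0 1 * B.1 1 1 = Adj0.zero
      rw [hA1, hB2, hA2, ttId_mul, Adj0.zero_mul, Adj0.add_zero]⟩⟩



namespace Stmt16

noncomputable section
open Classical

abbrev SS : Type := TT 1 2 zero_le_one
abbrev TB : Type := TTb 1 2 zero_le_one

namespace TBfacts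

lemma val_cases (a : TB) : a.1 = 0 ∨ (1 ≤ a.1 ∧ a.1 ≤ 2) := a.2

@[simp] lemma add_val (a b : TB) : (a + b).1 = max a.1 b.1 := rfl

lemma mul_val (a b : TB) :
    (a * b).1 = if a.1 = 0 then b.1 else if b.1 = 0 then a.1 else min (a.1 + b.1) 2 := by
  show (TTb.mul a b).1 = _
  unfold TTb.mul
  by_cases h1 : a.1 = 0 <;> by_cases h2 : b.1 = 0 <;> simp [h1, h2]

lemma ext' {a b : TB} (h : a.1 = b.1) : a = b := Subtype.ext h

end TBfacts

open TBfacts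

noncomputable instance : Zero SS := ⟨Adj0.zero⟩
noncomputable instance : One SS := ⟨ttId 1 2 zero_le_one⟩

noncomputable instance instACM : AddCommMonoid SS where
  add := (· + ·)
  add_assoc a b c := by
    cases a <;> cases b <;> cases c <;> try rfl
    show Adj0.elem _ = Adj0.elem _
    exact congrArg _ (ext' (max_assoc _ _ _))
  zero := 0
  zero_add a := by cases a <;> rfl
  add_zero a := by cases a <;> rfl
  nsmul := nsmulRec
  nsmul_zero _ := rfl
  nsmul_succ _ _ := rfl
  add_comm a b := by
    cases a <;> cases b <;> try rfl
    show Adj0.elem _ = Adj0.elem _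
    exact congrArg _ (ext' (max_comm _ _))

noncomputable instance instCM : CommMonoid SS where
  mul := (· * ·)
  mul_assoc a b c := by
    cases a <;> cases b <;> cases c <;> try rfl
    show Adj0.elem _ = Adj0.elem _
    apply congrArg; apply ext'
    rename_i x y z
    rcases val_cases x with hx | ⟨hx1, hx2⟩ <;> rcases val_cases y with hy | ⟨hy1, hy2⟩ <;>
      rcases val_cases z with hz | ⟨hz1, hz2⟩ <;>
      simp only [mul_val, min_def] <;> split_ifs <;> first | rfl | linarith
  one := 1
  one_mul a := by
    cases a with
    | zero => rfl
    | elem e =>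
      show Adj0.elem _ = Adj0.elem _
      apply congrArg; apply ext'
      refine (mul_val _ _).trans ?_; simp
  mul_one a := by
    cases a with
    | zero => rfl
    | elem e =>
      show Adj0.elem _ = Adj0.elem _
      apply congrArg; apply ext'
      refine (mul_val _ _).trans ?_
      by_cases h : e.1 = 0
      · simp [h]
      · simp [h]
  npow := npowRec
  npow_zero _ := rfl
  npow_succ _ _ := rfl
  mul_comm a b := by
    cases a <;> cases b <;> try rfl
    show Adj0.elem _ = Adj0.elem _
    apply congrArg; apply ext'
    rename_i x y
    simp only [mul_val]
    by_cases hx : x.1 = 0 <;> by_cases hy : y.1 = 0 <;> simp [hx, hy, add_comm]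

noncomputable instance instCSR : CommSemiring SS :=
  { instACM, instCM with
    left_distrib := fun a b c => by
      cases a <;> cases b <;> cases c <;> try rfl
      · show Adj0.elem _ = Adj0.elem _
        apply congrArg; apply ext'
        rename_i x y z
        rcases val_cases x with hx | ⟨hx1, hx2⟩ <;> rcases val_cases y with hy | ⟨hy1, hy2⟩ <;>
          rcases val_cases z with hz | ⟨hz1, hz2⟩ <;>
          simp only [mul_val, add_val, min_def, max_def] <;> split_ifs <;> first | rfl | linarith
    right_distrib := fun a b c => by
      cases a <;> cases b <;> cases c <;> try rfl
      all_goals show Adj0.elem _ = Adj0.elem _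
      · show Adj0.elem _ = Adj0.elem _
        apply congrArg; apply ext'
        rename_i x y z
        rcases val_cases x with hx | ⟨hx1, hx2⟩ <;> rcases val_cases y with hy | ⟨hy1, hy2⟩ <;>
          rcases val_cases z with hz | ⟨hz1, hz2⟩ <;>
          simp only [mul_val, add_val, min_def, max_def] <;> split_ifs <;> first | rfl | linarith
    zero_mul := fun a => rfl
    mul_zero := fun a => by cases a <;> rfl }

end

end Stmt16



namespace Stmt16

noncomputable section
open Classical

open TBfacts

/-! ### Scalar classification -/

def topS : SS := Adj0.elem ⟨2, Or.inr ⟨one_le_two, le_rfl⟩⟩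

lemma zero_defS : (0 : SS) = Adj0.zero := rfl
lemma one_defS : (1 : SS) = Adj0.elem ⟨0, Or.inl rfl⟩ := rfl

lemma elem_ne_zeroS (x : TB) : (Adj0.elem x : SS) ≠ 0 := fun h => by cases h

lemma elem_eq_oneS {x : TB} : (Adj0.elem x : SS) = 1 ↔ x.1 = 0 := by
  rw [one_defS]
  constructor
  · intro h
    injection h with h'
    rw [h']
  · intro h
    exact congrArg _ (ext' h)

lemma elem_mulS (x y : TB) : (Adj0.elem x : SS) * Adj0.elem y = Adj0.elem (x * y) := rfl
lemma elem_addS (x y : TB) : (Adj0.elem x : SS) + Adj0.elem y = Adj0.elem (x + y) := rfl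

lemma zero_ne_oneS : (0 : SS) ≠ 1 := by
  rw [zero_defS, one_defS]; exact fun h => by cases h

lemma SS_cases (a : SS) : a = 0 ∨ ∃ x : TB, a = Adj0.elem x := by
  cases a
  · exact Or.inl rfl
  · exact Or.inr ⟨_, rfl⟩

lemma smul_eq_zero {a b : SS} : a * b = 0 ↔ a = 0 ∨ b = 0 := by
  rcases SS_cases a with rfl | ⟨x, rfl⟩
  · simp [zero_mul]
  · rcases SS_cases b with rfl | ⟨y, rfl⟩
    · simp [mul_zero]
    · rw [elem_mulS]
      exact iff_of_false (elem_ne_zeroS _)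
        (by rintro (h | h) <;> exact elem_ne_zeroS _ h)

lemma smul_eq_one {a b : SS} : a * b = 1 ↔ a = 1 ∧ b = 1 := by
  rcases SS_cases a with rfl | ⟨x, rfl⟩
  · rw [zero_mul]
    exact iff_of_false zero_ne_oneS (fun h => zero_ne_oneS h.1)
  · rcases SS_cases b with rfl | ⟨y, rfl⟩
    · rw [mul_zero]
      exact iff_of_false zero_ne_oneS (fun h => zero_ne_oneS h.2)
    · rw [elem_mulS, elem_eq_oneS, elem_eq_oneS, elem_eq_oneS, mul_val]
      by_cases hx : x.1 = 0 <;> by_cases hy : y.1 = 0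
      · simp [hx, hy]
      · simp [hx, hy]
      · simp [hx, hy]
      · rcases val_cases x with h | ⟨hx1, hx2⟩
        · exact absurd h hx
        rcases val_cases y with h | ⟨hy1, hy2⟩
        · exact absurd h hy
        rw [if_neg hx, if_neg hy, min_eq_right (by linarith : (2:ℝ) ≤ x.1 + y.1)]
        constructor
        · intro h; linarith
        · rintro ⟨h, -⟩; exact absurd h hx

def isI (a : SS) : Prop := a ≠ 0 ∧ a ≠ 1

lemma isI_elim {a : SS} (h : isI a) : ∃ x : TB, a = Adj0.elem x ∧ 1 ≤ x.1 ∧ x.1 ≤ 2 := by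
  rcases SS_cases a with rfl | ⟨x, rfl⟩
  · exact absurd rfl h.1
  · rcases val_cases x with hx | hx
    · exact absurd (elem_eq_oneS.mpr hx) h.2
    · exact ⟨x, rfl, hx⟩

lemma top_mulS {a b : SS} (ha : isI a) (hb : isI b) : a * b = topS := by
  obtain ⟨x, rfl, hx1, hx2⟩ := isI_elim ha
  obtain ⟨y, rfl, hy1, hy2⟩ := isI_elim hb
  rw [elem_mulS]
  apply congrArg
  apply ext'
  rw [mul_val, if_neg (by linarith), if_neg (by linarith)]
  show min (x.1 + y.1) 2 = 2
  exact min_eq_right (by linarith)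

lemma sadd_eq_zero {a b : SS} : a + b = 0 ↔ a = 0 ∧ b = 0 := by
  rcases SS_cases a with rfl | ⟨x, rfl⟩
  · simp [zero_add]
  · rcases SS_cases b with rfl | ⟨y, rfl⟩
    · simp [add_zero, elem_ne_zeroS]
    · rw [elem_addS]
      exact iff_of_false (elem_ne_zeroS _) (fun h => elem_ne_zeroS _ h.1)

lemma sadd_ne_one {a b : SS} (ha : a ≠ 1) (hb : b ≠ 1) : a + b ≠ 1 := by
  rcases SS_cases a with rfl | ⟨x, rfl⟩
  · rw [zero_add]; exact hb
  · rcases SS_cases b with rfl | ⟨y, rfl⟩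
    · rw [add_zero]; exact ha
    · rw [elem_addS, Ne, elem_eq_oneS, add_val]
      rw [Ne, elem_eq_oneS] at ha hb
      rcases val_cases x with hx | ⟨hx1, hx2⟩
      · exact absurd hx ha
      rcases val_cases y with hy | ⟨hy1, hy2⟩
      · exact absurd hy hb
      intro hc
      rcases le_total x.1 y.1 with h | h
      · rw [max_eq_right h] at hc; linarith
      · rw [max_eq_left h] at hc; linarith

lemma sadd_01 {a b : SS} (ha : a = 0 ∨ a = 1) (hb : b = 0 ∨ b = 1) :
    a + b = 0 ∨ a + b = 1 := by
  rcases ha with rfl | rfl <;> rcases hb with rfl | rfl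
  · left; rw [add_zero]
  · right; rw [zero_add]
  · right; rw [add_zero]
  · right
    show Adj0.elem _ = (1 : SS)
    rw [one_defS]
    exact congrArg _ (ext' (by show max (0:ℝ) 0 = 0; simp))

/-! ### Finset sums -/

lemma sum_eq_zeroS {ι : Type} (s : Finset ι) (f : ι → SS) :
    ∑ i ∈ s, f i = 0 ↔ ∀ i ∈ s, f i = 0 := by
  classical
  induction s using Finset.induction_on with
  | empty => simp
  | insert a s' hx ih =>
    rw [Finset.sum_insert hx, sadd_eq_zero, ih]
    simp

lemma sum_ne_oneS {ι : Type} (s : Finset ι) (f : ι → SS) (h : ∀ i ∈ s, f i ≠ 1) :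
    ∑ i ∈ s, f i ≠ 1 := by
  classical
  induction s using Finset.induction_on with
  | empty => simpa using zero_ne_oneS
  | insert a s' hx ih =>
    rw [Finset.sum_insert hx]
    exact sadd_ne_one (h a (Finset.mem_insert_self a s'))
      (ih fun i hi => h i (Finset.mem_insert_of_mem hi))

lemma sum_01S {ι : Type} (s : Finset ι) (f : ι → SS) (h : ∀ i ∈ s, f i = 0 ∨ f i = 1) :
    ∑ i ∈ s, f i = 0 ∨ ∑ i ∈ s, f i = 1 := by
  classical
  induction s using Finset.induction_on with
  | empty => left; simp
  | insert a s' hx ih =>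
    rw [Finset.sum_insert hx]
    exact sadd_01 (h a (Finset.mem_insert_self a s'))
      (ih fun i hi => h i (Finset.mem_insert_of_mem hi))

end

end Stmt16



namespace Stmt16

noncomputable section
open Classical

abbrev Mat (n : ℕ) : Type := Matrix (Fin n) (Fin n) SS

variable {n : ℕ}

def Esk (A : Mat n) : Mat n := fun p q => if A p q = 1 then 1 else 0
def Nin (A : Mat n) : Mat n := fun p q => if A p q = 1 then 0 else A p q

lemma Esk_add_Nin (A : Mat n) : Esk A + Nin A = A := by
  funext p q
  simp only [Matrix.add_apply, Esk, Nin]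
  split_ifs with h
  · rw [add_zero, h]
  · rw [zero_add]

def EF (M : Mat n) : Prop := ∀ p q, M p q ≠ 1
def ZP (A B : Mat n) : Prop := ∀ p q, A p q = 0 ↔ B p q = 0
def Sk01 (M : Mat n) : Prop := ∀ p q, M p q = 0 ∨ M p q = 1
def pe (A B : Mat n) : Prop := ZP A B ∧ ∀ p q, A p q = 1 ↔ B p q = 1

lemma pe_refl (A : Mat n) : pe A A := ⟨fun _ _ => Iff.rfl, fun _ _ => Iff.rfl⟩
lemma pe_symm {A B : Mat n} (h : pe A B) : pe B A :=
  ⟨fun p q => (h.1 p q).symm, fun p q => (h.2 p q).symm⟩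

lemma EF_Nin (A : Mat n) : EF (Nin A) := by
  intro p q
  simp only [Nin]
  split_ifs with h
  · exact zero_ne_oneS
  · exact h

lemma EF_mul_left {A B : Mat n} (h : EF A) : EF (A * B) := fun p q => by
  rw [Matrix.mul_apply]
  exact sum_ne_oneS _ _ fun r _ hc => h p r (smul_eq_one.mp hc).1

lemma EF_mul_right {A B : Mat n} (h : EF B) : EF (A * B) := fun p q => by
  rw [Matrix.mul_apply]
  exact sum_ne_oneS _ _ fun r _ hc => h r q (smul_eq_one.mp hc).2

lemma EF_add {A B : Mat n} (hA : EF A) (hB : EF B) : EF (A + B) := fun p q => by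
  rw [Matrix.add_apply]
  exact sadd_ne_one (hA p q) (hB p q)

lemma EF_zero : EF (0 : Mat n) := fun p q => by
  rw [Matrix.zero_apply]; exact zero_ne_oneS

lemma Sk01_one : Sk01 (1 : Mat n) := fun p q => by
  rw [Matrix.one_apply]
  split_ifs
  · exact Or.inr rfl
  · exact Or.inl rfl

lemma Sk01_Esk (A : Mat n) : Sk01 (Esk A) := fun p q => by
  simp only [Esk]
  split_ifs
  · exact Or.inr rfl
  · exact Or.inl rfl

lemma Sk01_mul {A B : Mat n} (hA : Sk01 A) (hB : Sk01 B) : Sk01 (A * B) := fun p q => by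
  rw [Matrix.mul_apply]
  apply sum_01S
  intro r _
  rcases hA p r with h | h
  · left; rw [h, zero_mul]
  · rcases hB r q with h' | h'
    · left; rw [h', mul_zero]
    · right; rw [h, h', one_mul]

lemma Sk01_ext {A B : Mat n} (hA : Sk01 A) (hB : Sk01 B)
    (h : ∀ p q, A p q = 1 ↔ B p q = 1) : A = B := by
  funext p q
  rcases hA p q with h1 | h1 <;> rcases hB p q with h2 | h2
  · rw [h1, h2]
  · exact absurd ((h p q).mpr h2) (by rw [h1]; exact zero_ne_oneS)
  · exact absurd ((h p q).mp h1) (by rw [h2]; exact zero_ne_oneS)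
  · rw [h1, h2]

lemma ZP_of_eq {A B : Mat n} (h : A = B) : ZP A B := h ▸ fun _ _ => Iff.rfl

lemma ZP_mul {A A' B B' : Mat n} (h1 : ZP A A') (h2 : ZP B B') : ZP (A * B) (A' * B') := by
  intro p q
  rw [Matrix.mul_apply, Matrix.mul_apply, sum_eq_zeroS, sum_eq_zeroS]
  constructor <;> intro h r hr
  · have hh := h r hr
    rw [smul_eq_zero] at hh
    rw [smul_eq_zero]
    rcases hh with h' | h'
    · exact Or.inl ((h1 p r).mp h')
    · exact Or.inr ((h2 r q).mp h')
  · have hh := h r hr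
    rw [smul_eq_zero] at hh
    rw [smul_eq_zero]
    rcases hh with h' | h'
    · exact Or.inl ((h1 p r).mpr h')
    · exact Or.inr ((h2 r q).mpr h')

lemma ZP_add {A A' B B' : Mat n} (h1 : ZP A A') (h2 : ZP B B') : ZP (A + B) (A' + B') := by
  intro p q
  rw [Matrix.add_apply, Matrix.add_apply, sadd_eq_zero, sadd_eq_zero]
  exact and_congr (h1 p q) (h2 p q)

/-! ### List functions -/

def skL : List (Mat n) → Mat n
  | [] => 1
  | A :: l => Esk A * skL l

def sL : List (Mat n) → Mat n
  | [] => 0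
  | A :: l => Esk A * sL l + Nin A * skL l

def tL : List (Mat n) → Mat n
  | [] => 0
  | A :: l => Esk A * tL l + Nin A * (sL l + tL l)

lemma Sk01_skL (l : List (Mat n)) : Sk01 (skL l) := by
  induction l with
  | nil => exact Sk01_one
  | cons A l ih => exact Sk01_mul (Sk01_Esk A) ih

lemma EF_sL (l : List (Mat n)) : EF (sL l) := by
  induction l with
  | nil => exact EF_zero
  | cons A l ih => exact EF_add (EF_mul_right ih) (EF_mul_left (EF_Nin A))

lemma EF_tL (l : List (Mat n)) : EF (tL l) := by
  induction l with
  | nil => exact EF_zero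
  | cons A l ih => exact EF_add (EF_mul_right ih) (EF_mul_left (EF_Nin A))

lemma decomp (l : List (Mat n)) : l.prod = skL l + (sL l + tL l) := by
  induction l with
  | nil => simp [skL, sL, tL]
  | cons A l ih =>
    rw [List.prod_cons, ih]
    conv_lhs => rw [← Esk_add_Nin A]
    simp only [skL, sL, tL, add_mul, mul_add]
    abel

lemma skL_append (l1 l2 : List (Mat n)) : skL (l1 ++ l2) = skL l1 * skL l2 := by
  induction l1 with
  | nil => simp [skL]
  | cons A l ih => simp [skL, ih, mul_assoc]

lemma sL_append (l1 l2 : List (Mat n)) :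
    sL (l1 ++ l2) = skL l1 * sL l2 + sL l1 * skL l2 := by
  induction l1 with
  | nil => simp [skL, sL]
  | cons A l ih =>
    show sL (A :: (l ++ l2)) = _
    rw [sL, ih, skL_append, skL, sL]
    simp only [mul_add, add_mul, mul_assoc]
    abel

/-! ### Congruence for pattern-equivalent lists -/

lemma cong {l l' : List (Mat n)} (h : List.Forall₂ pe l l') :
    skL l = skL l' ∧ ZP (sL l) (sL l') ∧ tL l = tL l' := by
  induction h with
  | nil => exact ⟨rfl, fun _ _ => Iff.rfl, rfl⟩
  | @cons A B l l' hAB htail ih =>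
    obtain ⟨hsk, hsZP, htL⟩ := ih
    have hEsk : Esk A = Esk B := by
      funext p q
      simp only [Esk]
      rw [if_congr (hAB.2 p q) rfl rfl]
    have hNinZP : ZP (Nin A) (Nin B) := by
      intro p q
      simp only [Nin]
      by_cases h1 : A p q = 1
      · rw [if_pos h1, if_pos ((hAB.2 p q).mp h1)]
      · rw [if_neg h1, if_neg (fun hc => h1 ((hAB.2 p q).mpr hc))]
        exact hAB.1 p q
    have key : Nin A * (sL l + tL l) = Nin B * (sL l' + tL l') := by
      funext p q
      rw [Matrix.mul_apply, Matrix.mul_apply]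
      apply Finset.sum_congr rfl
      intro r _
      have hMZP : (sL l + tL l) r q = 0 ↔ (sL l' + tL l') r q = 0 := by
        rw [Matrix.add_apply, Matrix.add_apply, sadd_eq_zero, sadd_eq_zero, htL]
        exact and_congr (hsZP r q) Iff.rfl
      by_cases hz : Nin A p r = 0
      · rw [hz, (hNinZP p r).mp hz, zero_mul, zero_mul]
      · by_cases hm : (sL l + tL l) r q = 0
        · rw [hm, hMZP.mp hm, mul_zero, mul_zero]
        · have ia : isI (Nin A p r) := ⟨hz, EF_Nin A p r⟩
          have ib : isI (Nin B p r) := ⟨fun hc => hz ((hNinZP p r).mpr hc), EF_Nin B p r⟩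
          have im : isI ((sL l + tL l) r q) :=
            ⟨hm, EF_add (EF_sL l) (EF_tL l) r q⟩
          have im' : isI ((sL l' + tL l') r q) :=
            ⟨fun hc => hm (hMZP.mpr hc), EF_add (EF_sL l') (EF_tL l') r q⟩
          rw [top_mulS ia im, top_mulS ib im']
    refine ⟨?_, ?_, ?_⟩
    · show Esk A * skL l = Esk B * skL l'
      rw [hEsk, hsk]
    · show ZP (Esk A * sL l + Nin A * skL l) (Esk B * sL l' + Nin B * skL l')
      exact ZP_add (ZP_mul (ZP_of_eq hEsk) hsZP) (ZP_mul hNinZP (ZP_of_eq hsk))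
    · show Esk A * tL l + Nin A * (sL l + tL l) = Esk B * tL l' + Nin B * (sL l' + tL l')
      rw [key, hEsk, htL]

/-! ### The core swap lemma -/

lemma swap_core (l1 l2 l3 : List (Mat n)) (X Y : Mat n) (hpe : pe X Y)
    (h1 : skL l1 * (Esk X * skL l2) = skL l1)
    (h3 : skL l2 * (Esk X * skL l3) = skL l3) :
    (l1 ++ X :: (l2 ++ Y :: l3)).prod = (l1 ++ Y :: (l2 ++ X :: l3)).prod := by
  have hE : Esk X = Esk Y := by
    funext p q
    simp only [Esk]
    rw [if_congr (hpe.2 p q) rfl rfl]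
  set K1 := skL l1
  set K2 := skL l2
  set K3 := skL l3
  set F := Esk Y with hF
  have h1f : K1 * (F * K2) = K1 := by rw [← hE]; exact h1
  have h3f : K2 * (F * K3) = K3 := by rw [← hE]; exact h3
  have e1 : ∀ Z : Mat n, K1 * (F * (K2 * Z)) = K1 * Z := fun Z => by
    calc K1 * (F * (K2 * Z)) = K1 * (F * K2) * Z := by rw [mul_assoc, mul_assoc]
    _ = K1 * Z := by rw [h1f]
  have hforall : List.Forall₂ pe (l1 ++ X :: (l2 ++ Y :: l3)) (l1 ++ Y :: (l2 ++ X :: l3)) := by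
    refine List.rel_append (List.forall₂_same.mpr fun x _ => pe_refl x) ?_
    exact List.Forall₂.cons hpe
      (List.rel_append (List.forall₂_same.mpr fun x _ => pe_refl x)
        (List.Forall₂.cons (pe_symm hpe) (List.forall₂_same.mpr fun x _ => pe_refl x)))
  obtain ⟨hsk, -, htl⟩ := cong hforall
  rw [decomp, decomp, hsk, htl]
  congr 1
  -- remains: sL equality
  simp only [sL_append, skL_append, sL, skL, hE]
  simp only [mul_add, mul_assoc, add_mul]
  rw [h3f]
  rw [show skL l1 = K1 from rfl, show skL l2 = K2 from rfl, show skL l3 = K3 from rfl, ← hF]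
  simp only [e1]
  abel

end

end Stmt16



namespace Stmt16

noncomputable section
open Classical

variable {α : Type*}

/-! ### Generic list splitting lemmas -/

lemma split_mid (l : List α) {i j : ℕ} (hij : i < j) (hj : j < l.length) :
    l.drop i = l[i]'(by omega) ::
      ((l.drop (i+1)).take (j - i - 1) ++ l[j]'hj :: l.drop (j+1)) := by
  rw [List.drop_eq_getElem_cons (show i < l.length by omega)]
  congr 1
  conv_lhs => rw [← List.take_append_drop (j - i - 1) (l.drop (i+1))]
  congr 1
  rw [List.drop_drop, show (i+1) + (j - i - 1) = j by omega]
  exact List.drop_eq_getElem_cons hj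

lemma full_split (l : List α) {i j : ℕ} (hij : i < j) (hj : j < l.length) :
    l = l.take i ++ l[i]'(by omega) ::
      ((l.drop (i+1)).take (j - i - 1) ++ l[j]'hj :: l.drop (j+1)) := by
  conv_lhs => rw [← List.take_append_drop i l, split_mid l hij hj]

lemma take_split (l : List α) {i j : ℕ} (hij : i < j) (hj : j < l.length) :
    l.take j = l.take i ++ l[i]'(by omega) :: (l.drop (i+1)).take (j - i - 1) := by
  conv_lhs => rw [← List.take_append_drop i (l.take j)]
  congr 1
  · rw [List.take_take]; congr 1; omega
  · have h1 : (l.take j).drop i = (l.drop i).take (j - i) := by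
      rw [List.take_drop, show i + (j - i) = j by omega]
    rw [h1, List.drop_eq_getElem_cons (show i < l.length by omega),
      show j - i = (j - i - 1) + 1 by omega, List.take_succ_cons]
    simp only [Nat.add_sub_cancel]

/-! ### ofFn and swaps -/

lemma ofFn_swap_take {k : ℕ} (g : Fin k → α) (i j : Fin k) (hij : (i:ℕ) < (j:ℕ)) :
    (List.ofFn (fun t => g (Equiv.swap i j t))).take (i:ℕ) = (List.ofFn g).take (i:ℕ) := by
  apply List.ext_getElem
  · simp
  · intro t h1 h2
    have ht : t < (i:ℕ) := by simp at h1; omega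
    rw [List.getElem_take, List.getElem_take, List.getElem_ofFn, List.getElem_ofFn]
    rw [Equiv.swap_apply_of_ne_of_ne (Fin.ne_of_val_ne (by simpa using by omega))
      (Fin.ne_of_val_ne (by simpa using by omega))]

lemma ofFn_swap_drop {k : ℕ} (g : Fin k → α) (i j : Fin k) (hij : (i:ℕ) < (j:ℕ)) :
    (List.ofFn (fun t => g (Equiv.swap i j t))).drop ((j:ℕ)+1) = (List.ofFn g).drop ((j:ℕ)+1) := by
  apply List.ext_getElem
  · simp
  · intro t h1 h2
    rw [List.getElem_drop, List.getElem_drop, List.getElem_ofFn, List.getElem_ofFn]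
    rw [Equiv.swap_apply_of_ne_of_ne (Fin.ne_of_val_ne (by simp; omega))
      (Fin.ne_of_val_ne (by simp; omega))]

lemma ofFn_swap_mid {k : ℕ} (g : Fin k → α) (i j : Fin k) (hij : (i:ℕ) < (j:ℕ)) :
    ((List.ofFn (fun t => g (Equiv.swap i j t))).drop ((i:ℕ)+1)).take ((j:ℕ) - i - 1)
      = ((List.ofFn g).drop ((i:ℕ)+1)).take ((j:ℕ) - i - 1) := by
  apply List.ext_getElem
  · simp
  · intro t h1 h2
    have ht : t < (j:ℕ) - i - 1 := by simp at h1; omega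
    rw [List.getElem_take, List.getElem_take, List.getElem_drop, List.getElem_drop,
      List.getElem_ofFn, List.getElem_ofFn]
    rw [Equiv.swap_apply_of_ne_of_ne (Fin.ne_of_val_ne (by simp; omega))
      (Fin.ne_of_val_ne (by simp; omega))]

lemma ofFn_swap_at_i {k : ℕ} (g : Fin k → α) (i j : Fin k) (h : (i:ℕ) < (List.ofFn (fun t => g (Equiv.swap i j t))).length) :
    (List.ofFn (fun t => g (Equiv.swap i j t)))[(i:ℕ)]'h = g j := by
  rw [List.getElem_ofFn]
  have : (⟨(i:ℕ), by simpa using h⟩ : Fin k) = i := Fin.ext rfl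
  rw [this, Equiv.swap_apply_left]

lemma ofFn_swap_at_j {k : ℕ} (g : Fin k → α) (i j : Fin k) (h : (j:ℕ) < (List.ofFn (fun t => g (Equiv.swap i j t))).length) :
    (List.ofFn (fun t => g (Equiv.swap i j t)))[(j:ℕ)]'h = g i := by
  rw [List.getElem_ofFn]
  have : (⟨(j:ℕ), by simpa using h⟩ : Fin k) = j := Fin.ext rfl
  rw [this, Equiv.swap_apply_right]

lemma ofFn_at {k : ℕ} (g : Fin k → α) (i : Fin k) (h : (i:ℕ) < (List.ofFn g).length) :
    (List.ofFn g)[(i:ℕ)]'h = g i := by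
  rw [List.getElem_ofFn]

end

end Stmt16



namespace Stmt16

noncomputable section
open Classical

variable {n : ℕ}

/-! ### Patterns -/

def patF (A : Mat n) : Fin n → Fin n → Fin 3 :=
  fun p q => if A p q = 0 then 0 else if A p q = 1 then 1 else 2

lemma patF_pe {A B : Mat n} (h : patF A = patF B) : pe A B := by
  have key : ∀ p q, (A p q = 0 ↔ B p q = 0) ∧ (A p q = 1 ↔ B p q = 1) := by
    intro p q
    have hh := congrFun (congrFun h p) q
    simp only [patF] at hh
    split_ifs at hh <;>
      first
        | (exact absurd hh (by decide))
        | (constructor <;> constructor <;> intro <;> simp_all)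
  exact ⟨fun p q => (key p q).1, fun p q => (key p q).2⟩

/-! ### Bridge between `MatSR` and `Mat` -/

def gmap : MatSR SS n → Mat n := fun A => A

lemma foldl_addS (l : List SS) (a : SS) :
    l.foldl (optStep (· + ·)) (some a) = some (a + l.sum) := by
  induction l generalizing a with
  | nil => rw [List.foldl_nil, List.sum_nil, add_zero]
  | cons x l ih =>
    rw [List.foldl_cons]
    show l.foldl (optStep (· + ·)) (some (a + x)) = _
    rw [ih, List.sum_cons, add_assoc]

lemma finSum_eq (hn : 0 < n) (f : Fin n → SS) : finSum f = some (∑ r, f r) := by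
  obtain ⟨m, rfl⟩ : ∃ m, n = m + 1 := ⟨n - 1, by omega⟩
  show (List.ofFn f).foldl (optStep (· + ·)) none = _
  rw [List.ofFn_succ, List.foldl_cons]
  show (List.ofFn fun i => f i.succ).foldl (optStep (· + ·)) (some (f 0)) = _
  rw [foldl_addS, List.sum_ofFn, Fin.sum_univ_succ]

lemma mulMat_eq (hn : 0 < n) (A B : MatSR SS n) : gmap (A * B) = gmap A * gmap B := by
  funext p q
  show matMul A B p q = (gmap A * gmap B) p q
  rw [matMul, finSum_eq hn, Option.getD_some, Matrix.mul_apply]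
  rfl

lemma foldl_mulM (hn : 0 < n) (l : List (MatSR SS n)) (a : MatSR SS n) :
    ∃ b, l.foldl (optStep (· * ·)) (some a) = some b ∧
      gmap b = gmap a * (l.map gmap).prod := by
  induction l generalizing a with
  | nil => exact ⟨a, rfl, by rw [List.map_nil, List.prod_nil, mul_one]⟩
  | cons x l ih =>
    obtain ⟨b, hb, hgb⟩ := ih (a * x)
    refine ⟨b, ?_, ?_⟩
    · rw [List.foldl_cons]; exact hb
    · rw [hgb, mulMat_eq hn, List.map_cons, List.prod_cons, mul_assoc]

lemma finProd_eq (hn : 0 < n) {k : ℕ} (s : Fin (k+1) → MatSR SS n) :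
    ∃ b, finProd s = some b ∧ gmap b = (List.ofFn fun t => gmap (s t)).prod := by
  show ∃ b, (List.ofFn s).foldl (optStep (· * ·)) none = some b ∧ _
  rw [List.ofFn_succ]
  obtain ⟨b, hb, hgb⟩ := foldl_mulM hn (List.ofFn fun i : Fin k => s i.succ) (s 0)
  refine ⟨b, ?_, ?_⟩
  · rw [List.foldl_cons]
    exact hb
  · rw [hgb, List.ofFn_succ (f := fun t => gmap (s t)), List.prod_cons, List.map_ofFn]
    rfl

end

end Stmt16



namespace Stmt16

noncomputable section
open Classical

variable {n : ℕ}

lemma Esk_eq_of_pe {A B : Mat n} (h : pe A B) : Esk A = Esk B := by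
  funext p q
  simp only [Esk]
  rw [if_congr (h.2 p q) rfl rfl]

abbrev Gam (n : ℕ) : Type :=
  (Fin n → Fin n → Fin 3) × (Fin n → Fin n → Bool) × (Fin n → Fin n → Bool)

theorem stmt_16' (hn : 0 < n) :
    StronglyPermutable (MatSR (TT 1 2 zero_le_one) n) := by
  classical
  refine ⟨Fintype.card (Gam n) + 1, ?_, ?_⟩
  · have : 0 < Fintype.card (Gam n) := Fintype.card_pos
    omega
  intro s
  set g : Fin (Fintype.card (Gam n) + 1) → Mat n := fun t => gmap (s t) with hg
  set f : Fin (Fintype.card (Gam n) + 1) → Gam n := fun t =>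
    (patF (g t),
      fun p q => decide (skL ((List.ofFn g).take (t:ℕ)) p q = 1),
      fun p q => decide (skL ((List.ofFn g).drop ((t:ℕ)+1)) p q = 1)) with hf
  obtain ⟨i0, j0, hne, hfe⟩ := Fintype.exists_ne_map_eq_of_card_lt f (by simp)
  have main : ∀ i j : Fin (Fintype.card (Gam n) + 1), (i:ℕ) < (j:ℕ) → f i = f j →
      (List.ofFn fun t => g (Equiv.swap i j t)).prod = (List.ofFn g).prod := by
    intro i j hij hfeq
    have hpe : pe (g i) (g j) := patF_pe (congrArg Prod.fst hfeq)
    have h2 := congrArg (fun x : Gam n => x.2.1) hfeq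
    have h3 := congrArg (fun x : Gam n => x.2.2) hfeq
    simp only [hf] at h2 h3
    have hpre : skL ((List.ofFn g).take (i:ℕ)) = skL ((List.ofFn g).take (j:ℕ)) :=
      Sk01_ext (Sk01_skL _) (Sk01_skL _)
        (fun p q => decide_eq_decide.mp (congrFun (congrFun h2 p) q))
    have hsuf : skL ((List.ofFn g).drop ((i:ℕ)+1)) = skL ((List.ofFn g).drop ((j:ℕ)+1)) :=
      Sk01_ext (Sk01_skL _) (Sk01_skL _)
        (fun p q => decide_eq_decide.mp (congrFun (congrFun h3 p) q))
    have hjlen : (j:ℕ) < (List.ofFn g).length := by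
      rw [List.length_ofFn]; exact j.isLt
    have hilen : (i:ℕ) < (List.ofFn g).length := by omega
    have hfull : List.ofFn g = (List.ofFn g).take (i:ℕ) ++ g i ::
        (((List.ofFn g).drop ((i:ℕ)+1)).take ((j:ℕ) - i - 1) ++ g j ::
          (List.ofFn g).drop ((j:ℕ)+1)) := by
      have h := full_split (List.ofFn g) hij hjlen
      rw [ofFn_at g i, ofFn_at g j] at h
      exact h
    have hswapl : (List.ofFn fun t => g (Equiv.swap i j t)) = (List.ofFn g).take (i:ℕ) ++ g j ::
        (((List.ofFn g).drop ((i:ℕ)+1)).take ((j:ℕ) - i - 1) ++ g i ::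
          (List.ofFn g).drop ((j:ℕ)+1)) := by
      have h := full_split (List.ofFn fun t => g (Equiv.swap i j t)) hij
        (by rw [List.length_ofFn]; exact j.isLt)
      rw [ofFn_swap_at_i, ofFn_swap_at_j, ofFn_swap_take g i j hij,
        ofFn_swap_mid g i j hij, ofFn_swap_drop g i j hij] at h
      exact h
    have htake : (List.ofFn g).take (j:ℕ) = (List.ofFn g).take (i:ℕ) ++ g i ::
        ((List.ofFn g).drop ((i:ℕ)+1)).take ((j:ℕ) - i - 1) := by
      have h := take_split (List.ofFn g) hij hjlen
      rw [ofFn_at g i] at h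
      exact h
    have hdrop : (List.ofFn g).drop ((i:ℕ)+1) =
        ((List.ofFn g).drop ((i:ℕ)+1)).take ((j:ℕ) - i - 1) ++ g j ::
          (List.ofFn g).drop ((j:ℕ)+1) := by
      have h := split_mid (List.ofFn g) hij hjlen
      rw [List.drop_eq_getElem_cons hilen, ofFn_at g j] at h
      injection h with h1 h2
    have hE : Esk (g i) = Esk (g j) := Esk_eq_of_pe hpe
    have h1c : skL ((List.ofFn g).take (i:ℕ)) *
        (Esk (g i) * skL (((List.ofFn g).drop ((i:ℕ)+1)).take ((j:ℕ) - i - 1))) =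
        skL ((List.ofFn g).take (i:ℕ)) := by
      have e : skL ((List.ofFn g).take (j:ℕ)) = skL ((List.ofFn g).take (i:ℕ)) *
          (Esk (g i) * skL (((List.ofFn g).drop ((i:ℕ)+1)).take ((j:ℕ) - i - 1))) := by
        rw [htake, skL_append]
        rfl
      exact e.symm.trans hpre.symm
    have h3c : skL (((List.ofFn g).drop ((i:ℕ)+1)).take ((j:ℕ) - i - 1)) *
        (Esk (g i) * skL ((List.ofFn g).drop ((j:ℕ)+1))) =
        skL ((List.ofFn g).drop ((j:ℕ)+1)) := by
      have e : skL ((List.ofFn g).drop ((i:ℕ)+1)) =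
          skL (((List.ofFn g).drop ((i:ℕ)+1)).take ((j:ℕ) - i - 1)) *
          (Esk (g j) * skL ((List.ofFn g).drop ((j:ℕ)+1))) := by
        conv_lhs => rw [hdrop]
        rw [skL_append]
        rfl
      rw [hE]
      exact (e.symm.trans hsuf).symm ▸ rfl
    calc (List.ofFn fun t => g (Equiv.swap i j t)).prod
        = ((List.ofFn g).take (i:ℕ) ++ g j ::
            (((List.ofFn g).drop ((i:ℕ)+1)).take ((j:ℕ) - i - 1) ++ g i ::
              (List.ofFn g).drop ((j:ℕ)+1))).prod := by rw [hswapl]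
      _ = ((List.ofFn g).take (i:ℕ) ++ g i ::
            (((List.ofFn g).drop ((i:ℕ)+1)).take ((j:ℕ) - i - 1) ++ g j ::
              (List.ofFn g).drop ((j:ℕ)+1))).prod :=
          (swap_core _ _ _ (g i) (g j) hpe h1c h3c).symm
      _ = (List.ofFn g).prod := by rw [← hfull]
  have final : ∀ i j : Fin (Fintype.card (Gam n) + 1), (i:ℕ) < (j:ℕ) → f i = f j →
      ∃ σ : Equiv.Perm (Fin (Fintype.card (Gam n) + 1)),
        σ ≠ Equiv.refl _ ∧ finProd (fun t => s (σ t)) = finProd s := by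
    intro i j hij hfeq
    refine ⟨Equiv.swap i j, ?_, ?_⟩
    · intro hcon
      have h := Equiv.swap_apply_left i j
      rw [hcon] at h
      simp at h
      omega
    · obtain ⟨b, hb, hgb⟩ := finProd_eq hn s
      obtain ⟨b', hb', hgb'⟩ := finProd_eq hn (fun t => s (Equiv.swap i j t))
      rw [hb, hb']
      have hbb : gmap b' = gmap b := by
        rw [hgb, hgb']
        exact main i j hij hfeq
      exact congrArg some hbb
  rcases hne.lt_or_gt with hlt | hlt
  · exact final i0 j0 hlt hfe
  · obtain ⟨σ, h1, h2⟩ := final j0 i0 hlt hfe.symm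
    exact ⟨σ, h1, h2⟩

end

end Stmt16


/-- `M_n(𝕋_{[1,2]})` is strongly permutable for every `n`. -/
theorem stmt_16 (n : ℕ) (hn : 0 < n) :
    StronglyPermutable (MatSR (TT 1 2 zero_le_one) n) := by
  exact Stmt16.stmt_16' hn
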